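/- For all real x, y with 0 < x ≤ y ≤ 1, the quantity (x² + y² − x(1+y)) / (√(x²+y²) · √((y−x)² + (1−y)² + (1−x)²)) lies in the interval [−1/2, 1/√2]; moreover the value −1/2 is attained whenever y = x ∈ (0,1). -/

import Mathlib

/-!
The quantity has the form `n / √d` with `d = (x² + y²) · ((y − x)² + (1 − y)² + (1 − x)²)`,
so the bound `n / √d ≤ 1 / c` (resp. `-1/c ≤ n / √d`) only has to be checked when `n > 0`
(resp. `n < 0`), where it is the polynomial inequality `c² n² ≤ d` on the triangle
`0 ≤ x ≤ y ≤ 1`. On the diagonal `y = x` both side lengths are multiples of `√2` and the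
quotient is exactly `-1/2`.
-/

open Real

lemma div_sqrt_le_inv_of_sq_mul_le {n d c : ℝ} (hc : 0 < c) (h : 0 < n → c ^ 2 * n ^ 2 ≤ d) :
    n / √d ≤ c⁻¹ := by
  rcases le_or_gt n 0 with hn | hn
  · exact (div_nonpos_of_nonpos_of_nonneg hn (sqrt_nonneg d)).trans (inv_nonneg.2 hc.le)
  have hd : 0 < d := (by positivity : 0 < c ^ 2 * n ^ 2).trans_le (h hn)
  have hcn : c * n ≤ √d := le_sqrt_of_sq_le (by linarith [h hn])
  rw [div_le_iff₀ (sqrt_pos.2 hd), inv_mul_eq_div, le_div_iff₀ hc]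
  linarith

lemma neg_inv_le_div_sqrt_of_sq_mul_le {n d c : ℝ} (hc : 0 < c)
    (h : n < 0 → c ^ 2 * n ^ 2 ≤ d) : -c⁻¹ ≤ n / √d := by
  have := div_sqrt_le_inv_of_sq_mul_le (n := -n) (d := d) hc (fun hn => by
    simpa only [neg_sq] using h (neg_pos.1 hn))
  rw [neg_div] at this
  linarith

section Triangle

variable {x y : ℝ}

lemma two_mul_sq_le (hx : 0 ≤ x) (hxy : x ≤ y) (hy : y ≤ 1) :
    2 * (x ^ 2 + y ^ 2 - x * (1 + y)) ^ 2 ≤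
      (x ^ 2 + y ^ 2) * ((y - x) ^ 2 + (1 - y) ^ 2 + (1 - x) ^ 2) := by
  nlinarith [mul_nonneg (sub_nonneg.2 hxy) (sub_nonneg.2 hy), mul_nonneg hx (sub_nonneg.2 hxy),
    mul_nonneg hx (sub_nonneg.2 hy),
    mul_nonneg (mul_nonneg hx (sub_nonneg.2 hxy)) (sub_nonneg.2 hy)]

lemma four_mul_sq_le_of_neg (hx : 0 ≤ x) (hxy : x ≤ y) (hy : y ≤ 1)
    (hn : x ^ 2 + y ^ 2 - x * (1 + y) < 0) :
    4 * (x ^ 2 + y ^ 2 - x * (1 + y)) ^ 2 ≤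
      (x ^ 2 + y ^ 2) * ((y - x) ^ 2 + (1 - y) ^ 2 + (1 - x) ^ 2) := by
  nlinarith [mul_nonneg (sub_nonneg.2 hxy) (sub_nonneg.2 hy), mul_nonneg hx (sub_nonneg.2 hxy),
    mul_nonneg hx (sub_nonneg.2 hy),
    mul_nonneg (mul_nonneg hx (sub_nonneg.2 hxy)) (sub_nonneg.2 hy)]

lemma sqrt_sq_add_sq_self {a : ℝ} (ha : 0 ≤ a) : √(a ^ 2 + a ^ 2) = a * √2 := by
  rw [← two_mul, sqrt_mul zero_le_two, sqrt_sq ha, mul_comm]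

lemma div_sqrt_mul_sqrt_diagonal (hx : 0 < x) (hx1 : x < 1) :
    (x ^ 2 + x ^ 2 - x * (1 + x)) /
        (√(x ^ 2 + x ^ 2) * √((x - x) ^ 2 + (1 - x) ^ 2 + (1 - x) ^ 2)) = -(1 / 2) := by
  have h1x : 0 < 1 - x := sub_pos.2 hx1
  rw [sub_self, zero_pow two_ne_zero, zero_add, sqrt_sq_add_sq_self hx.le,
    sqrt_sq_add_sq_self h1x.le]
  field_simp
  rw [sq_sqrt zero_le_two]
  ring

end Triangle

theorem stmt_19 :
    (∀ x y : ℝ, 0 < x → x ≤ y → y ≤ 1 →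
      -(1 / 2) ≤ (x ^ 2 + y ^ 2 - x * (1 + y)) /
          (Real.sqrt (x ^ 2 + y ^ 2) *
            Real.sqrt ((y - x) ^ 2 + (1 - y) ^ 2 + (1 - x) ^ 2)) ∧
      (x ^ 2 + y ^ 2 - x * (1 + y)) /
          (Real.sqrt (x ^ 2 + y ^ 2) *
            Real.sqrt ((y - x) ^ 2 + (1 - y) ^ 2 + (1 - x) ^ 2)) ≤ 1 / Real.sqrt 2) ∧
    (∀ x : ℝ, 0 < x → x < 1 →
      (x ^ 2 + x ^ 2 - x * (1 + x)) /
          (Real.sqrt (x ^ 2 + x ^ 2) *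
            Real.sqrt ((x - x) ^ 2 + (1 - x) ^ 2 + (1 - x) ^ 2)) = -(1 / 2)) := by
  refine ⟨fun x y hx hxy hy => ?_, fun x hx hx1 => div_sqrt_mul_sqrt_diagonal hx hx1⟩
  rw [← sqrt_mul (by positivity), one_div, one_div]
  constructor
  · exact neg_inv_le_div_sqrt_of_sq_mul_le two_pos fun hn => by
      simpa only [show (2 : ℝ) ^ 2 = 4 by norm_num] using four_mul_sq_le_of_neg hx.le hxy hy hn
  · exact div_sqrt_le_inv_of_sq_mul_le (sqrt_pos.2 two_pos) fun _ => by
      simpa only [sq_sqrt zero_le_two] using two_mul_sq_le hx.le hxy hy
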